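/- The first cohomology of GL_2(ℤ) with coefficients in the second symmetric power of the standard representation vanishes: H^1(GL_2(ℤ), Sym²(ℚ²)) = 0. Equivalently, H^1(GL_2(ℤ), W) = 0, where W is the space of symmetric 2×2 rational matrices with g ∈ GL_2(ℤ) acting by A ↦ g A gᵀ. -/

import Mathlib

open Matrix
noncomputable section

/-- `GL_n(ℤ)`, the group of invertible `n × n` integer matrices. -/
abbrev GLn (n : ℕ) := Matrix.GeneralLinearGroup (Fin n) ℤ

/-- The space of symmetric `2 × 2` rational matrices. -/
def symMat : Submodule ℚ (Matrix (Fin 2) (Fin 2) ℚ) where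
  carrier := {A | Aᵀ = A}
  add_mem' := by
    intro a b ha hb
    simp only [Set.mem_setOf_eq] at *
    rw [Matrix.transpose_add, ha, hb]
  zero_mem' := by simp
  smul_mem' := by
    intro c A hA
    simp only [Set.mem_setOf_eq] at *
    rw [Matrix.transpose_smul, hA]

/-- The rational matrix associated to `g ∈ GL_2(ℤ)`. -/
def glq (g : GLn 2) : Matrix (Fin 2) (Fin 2) ℚ :=
  (↑g : Matrix (Fin 2) (Fin 2) ℤ).map (Int.cast : ℤ → ℚ)

lemma glq_mul (g h : GLn 2) : glq (g * h) = glq g * glq h := by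
  ext i j
  simp [glq, Matrix.mul_apply, Matrix.map_apply, Units.val_mul]

lemma glq_one : glq (1 : GLn 2) = 1 := by
  simp [glq, Matrix.map_one]

/-- The linear endomorphism `A ↦ g A gᵀ` of the space of `2 × 2` rational matrices. -/
def conjLM (g : GLn 2) : Matrix (Fin 2) (Fin 2) ℚ →ₗ[ℚ] Matrix (Fin 2) (Fin 2) ℚ where
  toFun A := glq g * A * (glq g)ᵀ
  map_add' A B := by
    simp [Matrix.mul_add, Matrix.add_mul]
  map_smul' c A := by
    simp [Matrix.mul_smul, Matrix.smul_mul]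

lemma conjLM_mem (g : GLn 2) {A : Matrix (Fin 2) (Fin 2) ℚ} (hA : A ∈ symMat) :
    conjLM g A ∈ symMat := by
  have hA' : Aᵀ = A := hA
  show (glq g * A * (glq g)ᵀ)ᵀ = glq g * A * (glq g)ᵀ
  rw [Matrix.transpose_mul, Matrix.transpose_mul, Matrix.transpose_transpose, hA',
    Matrix.mul_assoc]

/-- `Sym²(ℚ²)`, the second symmetric power of the standard representation of `GL_2(ℤ)`,
realized as the space of symmetric `2 × 2` rational matrices, with `g` acting by
`A ↦ g A gᵀ`. -/
def sym2Rep : Representation ℚ (GLn 2) symMat where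
  toFun g := LinearMap.restrict (conjLM g) (fun A hA => conjLM_mem g hA)
  map_one' := by
    ext A
    simp [LinearMap.restrict_apply, conjLM, glq_one]
  map_mul' g h := by
    ext A
    simp [LinearMap.restrict_apply, conjLM, glq_mul, Matrix.transpose_mul, Matrix.mul_assoc]

open groupCohomology

def Ez : GLn 2 := ⟨!![1,0;0,-1], !![1,0;0,-1], by decide, by decide⟩
def Sz : GLn 2 := ⟨!![0,-1;1,0], !![0,1;-1,0], by decide, by decide⟩
def Tz (b : ℤ) : GLn 2 := ⟨!![1,b;0,1], !![1,-b;0,1],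
  by ext i j; fin_cases i <;> fin_cases j <;> simp [Matrix.mul_apply, Fin.sum_univ_two],
  by ext i j; fin_cases i <;> fin_cases j <;> simp [Matrix.mul_apply, Fin.sum_univ_two]⟩

notation "H" => Subgroup.closure ({Sz, Tz 1, Ez} : Set (GLn 2))

lemma hSH : Sz ∈ H := Subgroup.subset_closure (by simp)
lemma hTH : Tz 1 ∈ H := Subgroup.subset_closure (by simp)
lemma hEH : Ez ∈ H := Subgroup.subset_closure (by simp)

lemma Tz_mul (a b : ℤ) : Tz a * Tz b = Tz (a + b) := by
  ext : 1
  show (!![1,a;0,1] : Matrix (Fin 2) (Fin 2) ℤ) * !![1,b;0,1] = _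
  ext i j; fin_cases i <;> fin_cases j <;>
    simp [Tz, Matrix.mul_apply, Fin.sum_univ_two, add_comm]

lemma TzH (b : ℤ) : Tz b ∈ H := by
  induction b using Int.induction_on with
  | zero =>
    have : Tz 0 = 1 := by
      ext : 1; ext i j; fin_cases i <;> fin_cases j <;> simp [Tz]
    rw [this]; exact one_mem _
  | succ k ih => rw [← Tz_mul k 1]; exact mul_mem ih hTH
  | pred k ih =>
    have : Tz (-(k:ℤ) - 1) = Tz (-k) * (Tz 1)⁻¹ := by
      rw [eq_mul_inv_iff_mul_eq, Tz_mul]; ring_nf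
    rw [this]; exact mul_mem ih (inv_mem hTH)

lemma detpm (g : GLn 2) : IsUnit ((↑g : Matrix (Fin 2) (Fin 2) ℤ).det) :=
  (Matrix.isUnit_iff_isUnit_det _).1 g.isUnit

lemma gen (g : GLn 2) : g ∈ H := by
  suffices h : ∀ n : ℕ, ∀ g : GLn 2, ((↑g : Matrix (Fin 2) (Fin 2) ℤ) 1 0).natAbs = n → g ∈ H from
    h _ g rfl
  intro n
  induction n using Nat.strong_induction_on with
  | _ n ih =>
    intro g hg
    set M : Matrix (Fin 2) (Fin 2) ℤ := ↑g with hM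
    by_cases hc : M 1 0 = 0
    · -- triangular
      have hdet : IsUnit (M.det) := (Matrix.isUnit_iff_isUnit_det _).1 g.isUnit
      rw [Matrix.det_fin_two, hc] at hdet
      simp only [mul_zero, sub_zero] at hdet
      have ha : M 0 0 = 1 ∨ M 0 0 = -1 := Int.isUnit_iff.1 (isUnit_of_mul_isUnit_left hdet)
      have hd : M 1 1 = 1 ∨ M 1 1 = -1 := Int.isUnit_iff.1 (isUnit_of_mul_isUnit_right hdet)
      rcases ha with ha | ha <;> rcases hd with hd | hd
      · have : g = Tz (M 0 1) := by
          ext : 1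
          ext i j; fin_cases i <;> fin_cases j <;> simp [Tz, ← hM, ha, hc, hd]
        rw [this]; exact TzH _
      · have : g = Tz (-(M 0 1)) * Ez := by
          ext : 1
          show M = !![1, -(M 0 1); 0,1] * !![1,0;0,-1]
          ext i j; fin_cases i <;> fin_cases j <;>
            simp [Matrix.mul_apply, Fin.sum_univ_two, ha, hc, hd]
        rw [this]; exact mul_mem (TzH _) hEH
      · have : g = Sz * Sz * Tz (M 0 1) * Ez := by
          ext : 1
          show M = !![0,-1;1,0] * !![0,-1;1,0] * !![1, M 0 1; 0,1] * !![1,0;0,-1]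
          ext i j; fin_cases i <;> fin_cases j <;>
            simp [Matrix.mul_apply, Fin.sum_univ_two, ha, hc, hd]
        rw [this]; exact mul_mem (mul_mem (mul_mem hSH hSH) (TzH _)) hEH
      · have : g = Sz * Sz * Tz (-(M 0 1)) := by
          ext : 1
          show M = !![0,-1;1,0] * !![0,-1;1,0] * !![1, -(M 0 1); 0,1]
          ext i j; fin_cases i <;> fin_cases j <;>
            simp [Matrix.mul_apply, Fin.sum_univ_two, ha, hc, hd]
        rw [this]; exact mul_mem (mul_mem hSH hSH) (TzH _)
    · -- Euclid step
      set c : ℤ := M 1 0 with hcdef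
      set q : ℤ := M 0 0 / c with hq
      have key : ((↑(Sz * Tz (-q) * g) : Matrix (Fin 2) (Fin 2) ℤ) 1 0) = M 0 0 % c := by
        show ((!![0,-1;1,0] * !![1,-q;0,1] : Matrix (Fin 2) (Fin 2) ℤ) * M) 1 0 = _
        rw [Int.emod_def]
        simp [Matrix.mul_apply, Fin.sum_univ_two]
        ring
      have hlt : (M 0 0 % c).natAbs < n := by
        have h1 : 0 ≤ M 0 0 % c := Int.emod_nonneg _ hc
        have h2 : M 0 0 % c < |c| := Int.emod_lt_abs _ hc
        rw [← hg]
        rw [Int.abs_eq_natAbs] at h2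
        omega
      have hmem : Sz * Tz (-q) * g ∈ H := ih _ hlt _ (by rw [key])
      have : g = (Sz * Tz (-q))⁻¹ * (Sz * Tz (-q) * g) := by group
      rw [this]
      exact mul_mem (inv_mem (mul_mem hSH (TzH _))) hmem

abbrev A' : Rep ℚ (GLn 2) := Rep.of sym2Rep

lemma rho_val (g : GLn 2) (v : symMat) :
    (↑(sym2Rep g v) : Matrix (Fin 2) (Fin 2) ℚ) = glq g * (v : Matrix (Fin 2) (Fin 2) ℚ) * (glq g)ᵀ := rfl

lemma glqE : glq Ez = !![1,0;0,-1] := by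
  ext i j; fin_cases i <;> fin_cases j <;> norm_num [glq, Ez, Matrix.map_apply]

lemma glqS : glq Sz = !![0,-1;1,0] := by
  ext i j; fin_cases i <;> fin_cases j <;> norm_num [glq, Sz, Matrix.map_apply]

lemma glqT : glq (Tz 1) = !![1,1;0,1] := by
  ext i j; fin_cases i <;> fin_cases j <;> norm_num [glq, Tz, Matrix.map_apply]

lemma main_coboundary (f : cocycles₁ A') : ∃ x : symMat, ∀ g : GLn 2,
    sym2Rep g x - x = f g := by
  have hf : ∀ g h : GLn 2, f (g * h) = A'.ρ g (f h) + f g := (mem_cocycles₁_iff (A := A') f).1 f.2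
  simp only [Rep.of_ρ] at hf
  set FS : Matrix (Fin 2) (Fin 2) ℚ := Subtype.val (f Sz) with hFSdef
  set FE : Matrix (Fin 2) (Fin 2) ℚ := Subtype.val (f Ez) with hFEdef
  set FT : Matrix (Fin 2) (Fin 2) ℚ := Subtype.val (f (Tz 1)) with hFTdef
  have hFSsym : FS 1 0 = FS 0 1 := congrFun (congrFun ((f Sz).2 : FSᵀ = FS) 0) 1
  have hFTsym : FT 1 0 = FT 0 1 := congrFun (congrFun ((f (Tz 1)).2 : FTᵀ = FT) 0) 1
  have hFEsym : FE 1 0 = FE 0 1 := congrFun (congrFun ((f Ez).2 : FEᵀ = FE) 0) 1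
  -- relation E*E = 1
  have hEE : Ez * Ez = 1 := by ext : 1; decide
  have u0 := hf Ez Ez
  rw [hEE, cocycles₁_map_one] at u0
  have m0 : (0 : Matrix (Fin 2) (Fin 2) ℚ) = glq Ez * FE * (glq Ez)ᵀ + FE :=
    congrArg Subtype.val u0
  rw [glqE] at m0
  have q00 := congrFun (congrFun m0 0) 0
  have q01 := congrFun (congrFun m0 0) 1
  have q11 := congrFun (congrFun m0 1) 1
  simp only [Matrix.mul_apply, Matrix.transpose_apply, Matrix.add_apply, Matrix.zero_apply,
    Fin.sum_univ_two, Matrix.cons_val', Matrix.cons_val_zero, Matrix.cons_val_one,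
    Matrix.head_cons, Matrix.head_fin_const, Matrix.empty_val',
    Matrix.cons_val_fin_one] at q00 q01 q11
  norm_num at q00 q01 q11
  -- relation (E*S)^2 = 1
  have hESES : Ez * Sz * Ez * Sz = 1 := by ext : 1; decide
  have u1 := hf (Ez * Sz * Ez) Sz
  rw [hESES, cocycles₁_map_one, hf (Ez * Sz) Ez, hf Ez Sz] at u1
  have m1 : (0 : Matrix (Fin 2) (Fin 2) ℚ) =
      glq (Ez * Sz * Ez) * FS * (glq (Ez * Sz * Ez))ᵀ +
        (glq (Ez * Sz) * FE * (glq (Ez * Sz))ᵀ + (glq Ez * FS * (glq Ez)ᵀ + FE)) :=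
    congrArg Subtype.val u1
  simp only [glq_mul, glqE, glqS] at m1
  have r00 := congrFun (congrFun m1 0) 0
  have r01 := congrFun (congrFun m1 0) 1
  have r11 := congrFun (congrFun m1 1) 1
  simp only [Matrix.mul_apply, Matrix.transpose_apply, Matrix.add_apply, Matrix.zero_apply,
    Fin.sum_univ_two, Matrix.cons_val', Matrix.cons_val_zero, Matrix.cons_val_one,
    Matrix.head_cons, Matrix.head_fin_const, Matrix.empty_val',
    Matrix.cons_val_fin_one] at r00 r01 r11
  norm_num at r00 r01 r11
  -- relation (E*T)^2 = 1
  have hETET : Ez * Tz 1 * Ez * Tz 1 = 1 := by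
    ext : 1
    show (!![1,0;0,-1] * !![1,1;0,1] * !![1,0;0,-1] * !![1,1;0,1] : Matrix (Fin 2) (Fin 2) ℤ) = 1
    decide
  have u2 := hf (Ez * Tz 1 * Ez) (Tz 1)
  rw [hETET, cocycles₁_map_one, hf (Ez * Tz 1) Ez, hf Ez (Tz 1)] at u2
  have m2 : (0 : Matrix (Fin 2) (Fin 2) ℚ) =
      glq (Ez * Tz 1 * Ez) * FT * (glq (Ez * Tz 1 * Ez))ᵀ +
        (glq (Ez * Tz 1) * FE * (glq (Ez * Tz 1))ᵀ + (glq Ez * FT * (glq Ez)ᵀ + FE)) :=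
    congrArg Subtype.val u2
  simp only [glq_mul, glqE, glqT] at m2
  have p00 := congrFun (congrFun m2 0) 0
  have p01 := congrFun (congrFun m2 0) 1
  have p11 := congrFun (congrFun m2 1) 1
  simp only [Matrix.mul_apply, Matrix.transpose_apply, Matrix.add_apply, Matrix.zero_apply,
    Fin.sum_univ_two, Matrix.cons_val', Matrix.cons_val_zero, Matrix.cons_val_one,
    Matrix.head_cons, Matrix.head_fin_const, Matrix.empty_val',
    Matrix.cons_val_fin_one] at p00 p01 p11
  norm_num at p00 p01 p11
  -- the primitive
  refine ⟨⟨!![FT 0 1 - FS 0 0, -(FS 0 1)/2; -(FS 0 1)/2, FT 0 1], ?_⟩, ?_⟩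
  · show (!![FT 0 1 - FS 0 0, -(FS 0 1)/2; -(FS 0 1)/2, FT 0 1] : Matrix (Fin 2) (Fin 2) ℚ)ᵀ = _
    ext i j; fin_cases i <;> fin_cases j <;> simp
  set x : symMat := ⟨!![FT 0 1 - FS 0 0, -(FS 0 1)/2; -(FS 0 1)/2, FT 0 1], _⟩ with hx
  intro g
  have hmem := gen g
  induction hmem using Subgroup.closure_induction with
  | mem y hy =>
    rcases hy with rfl | rfl | rfl
    · apply Subtype.ext
      show glq Sz * (x : Matrix (Fin 2) (Fin 2) ℚ) * (glq Sz)ᵀ - (x : Matrix (Fin 2) (Fin 2) ℚ) = FS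
      rw [glqS]
      ext i j
      fin_cases i <;> fin_cases j <;>
        simp only [Matrix.mul_apply, Matrix.transpose_apply, Matrix.sub_apply,
          Fin.sum_univ_two, Matrix.cons_val', Matrix.cons_val_zero, Matrix.cons_val_one,
          Matrix.head_cons, Matrix.head_fin_const, Matrix.empty_val', Matrix.cons_val_fin_one, hx] <;>
        norm_num <;> linarith [q00, q01, q11, r00, r01, r11, p00, p01, p11, hFSsym, hFTsym, hFEsym]
    · apply Subtype.ext
      show glq (Tz 1) * (x : Matrix (Fin 2) (Fin 2) ℚ) * (glq (Tz 1))ᵀ -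
        (x : Matrix (Fin 2) (Fin 2) ℚ) = FT
      rw [glqT]
      ext i j
      fin_cases i <;> fin_cases j <;>
        simp only [Matrix.mul_apply, Matrix.transpose_apply, Matrix.sub_apply,
          Fin.sum_univ_two, Matrix.cons_val', Matrix.cons_val_zero, Matrix.cons_val_one,
          Matrix.head_cons, Matrix.head_fin_const, Matrix.empty_val', Matrix.cons_val_fin_one, hx] <;>
        norm_num <;> linarith [q00, q01, q11, r00, r01, r11, p00, p01, p11, hFSsym, hFTsym, hFEsym]
    · apply Subtype.ext
      show glq Ez * (x : Matrix (Fin 2) (Fin 2) ℚ) * (glq Ez)ᵀ - (x : Matrix (Fin 2) (Fin 2) ℚ) = FE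
      rw [glqE]
      ext i j
      fin_cases i <;> fin_cases j <;>
        simp only [Matrix.mul_apply, Matrix.transpose_apply, Matrix.sub_apply,
          Fin.sum_univ_two, Matrix.cons_val', Matrix.cons_val_zero, Matrix.cons_val_one,
          Matrix.head_cons, Matrix.head_fin_const, Matrix.empty_val', Matrix.cons_val_fin_one, hx] <;>
        norm_num <;> linarith [q00, q01, q11, r00, r01, r11, p00, p01, p11, hFSsym, hFTsym, hFEsym]
  | one =>
    rw [_root_.map_one, Module.End.one_apply, sub_self]
    exact (cocycles₁_map_one f).symm
  | mul y z hy hz ihy ihz =>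
    rw [hf y z, ← ihy, ← ihz, _root_.map_mul, Module.End.mul_apply, map_sub]
    exact (sub_add_sub_cancel _ _ _).symm
  | inv y hy ihy =>
    have hinv : ∀ v : symMat, sym2Rep y⁻¹ (sym2Rep y v) = v := fun v => by
      rw [← Module.End.mul_apply, ← _root_.map_mul, inv_mul_cancel, _root_.map_one,
        Module.End.one_apply]
    have h1 : sym2Rep y (f y⁻¹) = - f y := cocycles₁_map_inv f y
    rw [← ihy] at h1
    have h2 := congrArg (sym2Rep y⁻¹) h1
    rw [hinv] at h2
    rw [h2, map_neg, map_sub, hinv, neg_sub]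

/-- The first cohomology of `GL_2(ℤ)` with coefficients in the second symmetric power of
the standard representation (realized as symmetric `2 × 2` rational matrices with action
`A ↦ g A gᵀ`) vanishes. -/
theorem groupCohomology_GL2_sym2 :
    Subsingleton (groupCohomology (Rep.of sym2Rep) 1) := by
  have h1 : Subsingleton (groupCohomology.H1 A') := by
    refine subsingleton_of_forall_eq 0 fun a => ?_
    induction a using groupCohomology.H1_induction_on with
    | h f =>
    rw [H1π_eq_zero_iff, coboundaries₁, LinearMap.mem_range]
    obtain ⟨x, hx⟩ := main_coboundary f
    exact ⟨x, funext fun g => by rw [d₀₁_hom_apply]; exact hx g⟩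
  exact h1
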